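/- Let E_K be any permutation of {0,1}^n, let h, x ∈ {0,1}^n, and let C = C_1‖C_2 = HCTR_{K,h}(x‖x) with empty tweak (so the plaintext consists of the two identical n-bit blocks P_1 = P_2 = x). Setting S = E_K^{−1}(C_2 ⊕ x) ⊕ bin_n(1), the identity C_1 ⊕ S ⊕ x = (x ⊕ C_2) · h² holds in GF(2^n). In particular, if the block-cipher key K is known, then from the single plaintext–ciphertext pair (x‖x, C) the hash key h satisfies an explicit quadratic equation over GF(2^n) and can be recovered. -/

import Mathlib

/-- Integer represented by a bit string (msb-first). -/
def bitsToNat : List Bool → ℕ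
  | [] => 0
  | b :: t => (if b then 2 ^ t.length else 0) + bitsToNat t

/-- An `n`-bit block from a bit string of length at most `n` (msb-first). -/
def blockToBV (n : ℕ) (l : List Bool) : BitVec n := BitVec.ofNat n (bitsToNat l)

/-- `pad`: append zeros on the right to get a full `n`-bit block. -/
def padBlock (n : ℕ) (l : List Bool) : BitVec n :=
  blockToBV n (l ++ List.replicate (n - l.length) false)

/-- `parse_n` followed by padding of the last block. -/
def blocksOf (n : ℕ) (Z : List Bool) : List (BitVec n) :=
  (Z.toChunks n).map (padBlock n)

/-- Number of `n`-bit blocks obtained from parsing `Z`. -/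
def numBlocks (n : ℕ) (Z : List Bool) : ℕ := (Z.toChunks n).length

/-- The HCTR hash function: `H_h(P) = h` if `P` is empty, and otherwise
`H_h(P) = P₁h^{m+1} ⊕ ⋯ ⊕ (P_m‖0^{n-r})h² ⊕ bin_n(|P|)h` (Horner evaluation),
where the equivalence `ι` identifies `{0,1}ⁿ` with `GF(2ⁿ)` (XOR = addition). -/
def hctrHash {n : ℕ} {F : Type*} [Field F] (ι : BitVec n ≃ F) (h : F)
    (P : List Bool) : F :=
  if P.isEmpty then h
  else ((blocksOf n P).map ι ++ [ι (BitVec.ofNat n P.length)]).foldl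
    (fun acc c => (acc + c) * h) 0

/-- Bits of an `n`-bit block, msb first. -/
def bvToBits (n : ℕ) (X : BitVec n) : List Bool :=
  (List.range n).map fun i => X.toNat.testBit (n - 1 - i)

/-- The internal value `CC = P₁ ⊕ H_h(P₂‖…‖P_m‖T)` of HCTR. -/
def hctrCC {n : ℕ} {F : Type*} [Field F] (ι : BitVec n ≃ F) (hk : BitVec n)
    (T P : List Bool) : BitVec n :=
  blockToBV n (P.take n) ^^^ ι.symm (hctrHash ι (ι hk) (P.drop n ++ T))

/-- HCTR encryption with block-cipher permutation `E`, hash key `hk` and tweak `T`: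
`CC = P₁ ⊕ H_h(P₂‖…‖P_m‖T)`, `S = CC ⊕ E(CC)`, `C_i = P_i ⊕ E(S ⊕ bin_n(i-1))`
(truncated to `|P_i|` bits) for `2 ≤ i ≤ m`, and `C₁ = E(CC) ⊕ H_h(C₂‖…‖C_m‖T)`. -/
def hctrEnc {n : ℕ} {F : Type*} [Field F] (ι : BitVec n ≃ F)
    (E : Equiv.Perm (BitVec n)) (hk : BitVec n) (T P : List Bool) : List Bool :=
  let CC : BitVec n := hctrCC ι hk T P
  let S : BitVec n := CC ^^^ E CC
  let Crest : List Bool :=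
    (((P.drop n).toChunks n).zipIdx.map fun p =>
      List.zipWith xor p.1 (bvToBits n (E (S ^^^ BitVec.ofNat n (p.2 + 1))))).flatten
  let C1 : BitVec n := E CC ^^^ ι.symm (hctrHash ι (ι hk) (Crest ++ T))
  bvToBits n C1 ++ Crest

/-! For the plaintext `x‖x` both calls of the hash are on a single full block, so
`H_h(Y) = Y·h² + bin_n(n)·h`. The second cipher call is `C₂ = x ⊕ E(S ⊕ 1)` with
`S = CC ⊕ E(CC)`, so `S` is read off the ciphertext; then
`C₁ ⊕ S ⊕ x = H_h(C₂) ⊕ CC ⊕ x = H_h(C₂) ⊕ H_h(x)`, in which the linear terms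
`bin_n(n)·h` cancel in characteristic two. -/

lemma bitsToNat_testBits (v n : ℕ) :
    bitsToNat ((List.range n).map fun i => v.testBit (n - 1 - i)) = v % 2 ^ n := by
  induction n with
  | zero => simp [bitsToNat, Nat.mod_one]
  | succ n ih =>
    have htail : (List.range n).map (fun i => v.testBit (n + 1 - 1 - (i + 1))) =
        (List.range n).map fun i => v.testBit (n - 1 - i) :=
      List.map_congr_left fun i _ => by congr 1; omega
    rw [List.range_succ_eq_map, List.map_cons, List.map_map, Function.comp_def, htail,
      bitsToNat, ih, Nat.mod_pow_succ, Nat.testBit_eq_decide_div_mod_eq]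
    simp only [Nat.add_sub_cancel, Nat.sub_zero, List.length_map, List.length_range]
    rcases Nat.mod_two_eq_zero_or_one (v / 2 ^ n) with h | h <;> simp [h, Nat.add_comm]

lemma length_bvToBits (n : ℕ) (X : BitVec n) : (bvToBits n X).length = n := by
  simp [bvToBits]

lemma blockToBV_bvToBits (n : ℕ) (X : BitVec n) : blockToBV n (bvToBits n X) = X := by
  rw [blockToBV, bvToBits, bitsToNat_testBits, Nat.mod_eq_of_lt X.isLt, BitVec.ofNat_toNat,
    BitVec.setWidth_eq]

lemma zipWith_xor_bvToBits (n : ℕ) (X Y : BitVec n) :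
    List.zipWith xor (bvToBits n X) (bvToBits n Y) = bvToBits n (X ^^^ Y) := by
  simp only [bvToBits, List.zipWith_map, List.zipWith_self, BitVec.toNat_xor, Nat.testBit_xor]

lemma List.toChunks_go_of_length_le {α : Type*} {n : ℕ} (xs : List α) (acc₁ : Array α)
    (acc₂ : Array (List α)) (h : xs.length + acc₁.size ≤ n) :
    List.toChunks.go n xs acc₁ acc₂ = acc₂.toList ++ [acc₁.toList ++ xs] := by
  induction xs generalizing acc₁ with
  | nil => simp [List.toChunks.go]
  | cons a t ih =>
    simp only [List.length_cons] at h
    have hsize : (acc₁.size == n) = false := by simp only [beq_eq_false_iff_ne]; omega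
    rw [List.toChunks.go, hsize, if_neg Bool.false_ne_true, ih _ (by simp; omega)]
    simp

lemma List.toChunks_eq_singleton {α : Type*} {n : ℕ} {l : List α} (h₀ : l ≠ [])
    (hl : l.length ≤ n) : l.toChunks n = [l] := by
  obtain ⟨a, t, rfl⟩ := List.exists_cons_of_ne_nil h₀
  obtain ⟨m, rfl⟩ : ∃ m, n = m + 1 := ⟨n - 1, by simp at hl; omega⟩
  rw [List.toChunks]
  · rw [List.toChunks_go_of_length_le]
    · simp
    · simpa using hl
  · omega

section HCTR

variable {n : ℕ} {F : Type*} [Field F] (ι : BitVec n ≃ F)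

lemma two_eq_zero_of_map_xor (hι : ∀ X Y : BitVec n, ι (X ^^^ Y) = ι X + ι Y) :
    (2 : F) = 0 := by
  have h₀ := hι 0 0
  have h₁ := hι (ι.symm 1) (ι.symm 1)
  rw [BitVec.xor_self] at h₀ h₁
  rw [Equiv.apply_symm_apply] at h₁
  linear_combination -h₀ - h₁

lemma hctrHash_bvToBits (hn : 1 ≤ n) (h : F) (X : BitVec n) :
    hctrHash ι h (bvToBits n X) = ι X * h ^ 2 + ι (BitVec.ofNat n n) * h := by
  have hlen := length_bvToBits n X
  have hne : bvToBits n X ≠ [] := List.ne_nil_of_length_pos (by omega)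
  have hpad : padBlock n (bvToBits n X) = X := by
    rw [padBlock, hlen, Nat.sub_self, List.replicate_zero, List.append_nil, blockToBV_bvToBits]
  rw [hctrHash, if_neg (by simpa using hne), blocksOf, List.toChunks_eq_singleton hne hlen.le]
  simp only [List.map_cons, List.map_nil, hpad, List.cons_append, List.nil_append,
    List.foldl_cons, List.foldl_nil, hlen]
  ring

lemma hctrEnc_two_blocks (hn : 1 ≤ n) (E : Equiv.Perm (BitVec n)) (hk : BitVec n)
    (T : List Bool) (P₁ P₂ : BitVec n) :
    hctrEnc ι E hk T (bvToBits n P₁ ++ bvToBits n P₂) =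
      let CC := P₁ ^^^ ι.symm (hctrHash ι (ι hk) (bvToBits n P₂ ++ T))
      let C₂ := P₂ ^^^ E (CC ^^^ E CC ^^^ 1)
      bvToBits n (E CC ^^^ ι.symm (hctrHash ι (ι hk) (bvToBits n C₂ ++ T))) ++ bvToBits n C₂ := by
  have hlen := length_bvToBits n P₂
  have hne : bvToBits n P₂ ≠ [] := List.ne_nil_of_length_pos (by omega)
  simp only [hctrEnc, hctrCC, List.take_left' (length_bvToBits n P₁),
    List.drop_left' (length_bvToBits n P₁), blockToBV_bvToBits,
    List.toChunks_eq_singleton hne hlen.le, List.zipIdx_cons, List.zipIdx_nil, List.map_cons,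
    List.map_nil, List.flatten_cons, List.flatten_nil, List.append_nil, zero_add,
    zipWith_xor_bvToBits]
  rfl

end HCTR

theorem hctr_key_dependency_general (n : ℕ) (hn : 1 ≤ n)
    (F : Type*) [Field F] (ι : BitVec n ≃ F)
    (hι : ∀ x y : BitVec n, ι (x ^^^ y) = ι x + ι y)
    (E : Equiv.Perm (BitVec n)) (hk x : BitVec n) :
    let C := hctrEnc ι E hk [] (bvToBits n x ++ bvToBits n x)
    let C₁ := blockToBV n (C.take n)
    let C₂ := blockToBV n (C.drop n)
    let S := E.symm (C₂ ^^^ x) ^^^ (1 : BitVec n)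
    ι C₁ + ι S + ι x = (ι x + ι C₂) * ι hk ^ 2 := by
  intro C C₁ C₂ S
  set CC := x ^^^ ι.symm (hctrHash ι (ι hk) (bvToBits n x)) with hCC
  set D := x ^^^ E (CC ^^^ E CC ^^^ 1) with hD
  have hC : C = bvToBits n (E CC ^^^ ι.symm (hctrHash ι (ι hk) (bvToBits n D))) ++
      bvToBits n D := by
    simpa only [List.append_nil] using hctrEnc_two_blocks ι hn E hk [] x x
  have hC₁ : C₁ = E CC ^^^ ι.symm (hctrHash ι (ι hk) (bvToBits n D)) := by
    rw [show C₁ = blockToBV n (C.take n) from rfl, hC, List.take_left' (length_bvToBits n _),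
      blockToBV_bvToBits]
  have hC₂ : C₂ = D := by
    rw [show C₂ = blockToBV n (C.drop n) from rfl, hC, List.drop_left' (length_bvToBits n _),
      blockToBV_bvToBits]
  have hS : S = CC ^^^ E CC := by
    simp [S, hC₂, hD, BitVec.xor_assoc]
  have hιCC : ι CC = ι x + (ι x * ι hk ^ 2 + ι (BitVec.ofNat n n) * ι hk) := by
    rw [hCC, hι, Equiv.apply_symm_apply, hctrHash_bvToBits ι hn]
  rw [hC₁, hC₂, hS]
  simp only [hι, Equiv.apply_symm_apply, hctrHash_bvToBits ι hn, hιCC]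
  linear_combination (ι (E CC) + ι (BitVec.ofNat n n) * ι hk + ι x) * two_eq_zero_of_map_xor ι hι

/-- Key-dependency attack on HCTR: for the encryption `C = C₁‖C₂` of `x‖x` with empty
tweak, setting `S = E⁻¹(C₂ ⊕ x) ⊕ bin_n(1)`, the identity
`C₁ ⊕ S ⊕ x = (x ⊕ C₂)·h²` holds in `GF(2ⁿ)`; so a known block-cipher key yields an
explicit quadratic equation for the hash key `h`. -/
theorem hctr_key_dependency (n : ℕ) (hn : 1 ≤ n)
    (F : Type*) [Field F] (ι : BitVec n ≃ F)
    (hι : ∀ x y : BitVec n, ι (x ^^^ y) = ι x + ι y)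
    (hone : ι 1 = 1)
    (E : Equiv.Perm (BitVec n)) (hk x : BitVec n) :
    let C := hctrEnc ι E hk [] (bvToBits n x ++ bvToBits n x)
    let C₁ := blockToBV n (C.take n)
    let C₂ := blockToBV n (C.drop n)
    let S := E.symm (C₂ ^^^ x) ^^^ (1 : BitVec n)
    ι C₁ + ι S + ι x = (ι x + ι C₂) * ι hk ^ 2 :=
  hctr_key_dependency_general n hn F ι hι E hk x
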